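/- Let 𝒳 and 𝒴 be n×n real symmetric matrices that commute: 𝒳·𝒴 = 𝒴·𝒳. Then d(exp(𝒳), exp(𝒴)) = ‖𝒳 − 𝒴‖_F, where exp denotes the matrix exponential. -/

import Mathlib

/-!
The square root of `exp 𝒳` is `exp (𝒳/2)`, and exponentials of commuting matrices multiply
like scalars, so `exp(𝒳)^{-1/2} exp(𝒴) exp(𝒳)^{-1/2} = exp(𝒴 - 𝒳)`. The eigenvalues of `exp(𝒴 - 𝒳)` are the
exponentials of those of `𝒴 - 𝒳` (with multiplicity, by comparing characteristic polynomials),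
so the squared logarithms sum to `∑ λᵢ(𝒴 - 𝒳)² = tr((𝒴 - 𝒳)ᵀ(𝒴 - 𝒳))`.
-/

open Matrix

open scoped Classical in
/-- The symmetric positive-semidefinite square root of a matrix (junk value `0` if the
matrix is not positive semidefinite). -/
noncomputable def msqrt {n : ℕ} (X : Matrix (Fin n) (Fin n) ℝ) : Matrix (Fin n) (Fin n) ℝ :=
  if h : X.PosSemidef then
    (h.1.eigenvectorUnitary : Matrix (Fin n) (Fin n) ℝ) *
      diagonal ((RCLike.ofReal : ℝ → ℝ) ∘ Real.sqrt ∘ h.1.eigenvalues) *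
      (star (h.1.eigenvectorUnitary : Matrix (Fin n) (Fin n) ℝ))
  else 0

open scoped Classical in
/-- The geodesic distance between positive-definite matrices `X` and `Y`:
`d(X,Y) = sqrt (∑ i, (log λ_i)²)` where `λ_i` are the eigenvalues of the symmetric
positive-definite matrix `X^{-1/2} Y X^{-1/2}` (junk value `0` if that matrix is
not symmetric). -/
noncomputable def geoDist {n : ℕ} (X Y : Matrix (Fin n) (Fin n) ℝ) : ℝ :=
  if h : ((msqrt X)⁻¹ * Y * (msqrt X)⁻¹).IsHermitian then
    Real.sqrt (∑ i, Real.log (h.eigenvalues i) ^ 2)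
  else 0

/-- The Frobenius norm `‖A‖_F = sqrt (tr (Aᵀ A))`. -/
noncomputable def frobNorm {n : ℕ} (A : Matrix (Fin n) (Fin n) ℝ) : ℝ :=
  Real.sqrt (Matrix.trace (Aᵀ * A))

namespace Matrix.IsHermitian

variable {𝕜 : Type*} [RCLike 𝕜] {m : Type*} [Fintype m] [DecidableEq m] {A : Matrix m m 𝕜}

open Polynomial in
theorem map_eigenvalues_cfc (hA : A.IsHermitian) (f : ℝ → ℝ) (hfA : (cfc f A).IsHermitian) :
    Finset.univ.val.map hfA.eigenvalues = Finset.univ.val.map (f ∘ hA.eigenvalues) := by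
  apply Multiset.map_injective (RCLike.ofReal_injective (K := 𝕜))
  rw [Multiset.map_map, Multiset.map_map, ← hfA.roots_charpoly_eq_eigenvalues,
    hA.charpoly_cfc_eq, Finset.prod_eq_multiset_prod]
  simpa only [Multiset.map_map, Function.comp_def] using
    roots_multiset_prod_X_sub_C (Finset.univ.val.map (RCLike.ofReal ∘ f ∘ hA.eigenvalues))

theorem sum_eigenvalues_cfc (hA : A.IsHermitian) (f g : ℝ → ℝ) (hfA : (cfc f A).IsHermitian) :
    ∑ i, g (hfA.eigenvalues i) = ∑ i, g (f (hA.eigenvalues i)) := by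
  change (Finset.univ.val.map (g ∘ hfA.eigenvalues)).sum
    = (Finset.univ.val.map (g ∘ f ∘ hA.eigenvalues)).sum
  rw [← Multiset.map_map, ← Multiset.map_map g, hA.map_eigenvalues_cfc f hfA]

theorem cfc_comp_eq (hA : A.IsHermitian) (g f : ℝ → ℝ) : cfc (g ∘ f) A = cfc g (cfc f A) :=
  cfc_comp g f A hA.isSelfAdjoint ((A.finite_real_spectrum.image f).continuousOn g)
    (A.finite_real_spectrum.continuousOn f)

theorem cfc_exp (hA : A.IsHermitian) : cfc Real.exp A = NormedSpace.exp A := by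
  -- `NormedSpace.exp` only sees the topology, so any compatible normed ℝ-algebra structure will do.
  let : NormedRing (Matrix m m 𝕜) := Matrix.instL2OpNormedRing
  let : NormedAlgebra 𝕜 (Matrix m m 𝕜) := Matrix.instL2OpNormedAlgebra
  let : NormedAlgebra ℝ (Matrix m m 𝕜) :=
    { (inferInstance : Algebra ℝ (Matrix m m 𝕜)) with
      norm_smul_le := fun r x => by
        rw [RCLike.real_smul_eq_coe_smul (K := 𝕜), Real.norm_eq_abs, ← RCLike.norm_ofReal (K := 𝕜)]
        exact norm_smul_le _ _ }
  exact CFC.real_exp_eq_normedSpace_exp hA.isSelfAdjoint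

open scoped MatrixOrder ComplexOrder in
theorem posSemidef_exp (hA : A.IsHermitian) : (NormedSpace.exp A).PosSemidef := by
  rw [← nonneg_iff_posSemidef, ← hA.cfc_exp]
  exact cfc_nonneg fun x _ => (Real.exp_pos x).le

theorem sum_sq_log_eigenvalues_exp (hA : A.IsHermitian) (h : (NormedSpace.exp A).IsHermitian) :
    ∑ i, Real.log (h.eigenvalues i) ^ 2 = ∑ i, hA.eigenvalues i ^ 2 := by
  revert h
  rw [← hA.cfc_exp]
  intro h
  simp only [hA.sum_eigenvalues_cfc Real.exp (fun x => Real.log x ^ 2) h, Real.log_exp]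

end Matrix.IsHermitian

theorem Matrix.IsHermitian.sum_sq_eigenvalues {m : Type*} [Fintype m] [DecidableEq m]
    {A : Matrix m m ℝ} (hA : A.IsHermitian) :
    ∑ i, hA.eigenvalues i ^ 2 = (Aᵀ * A).trace := by
  have hsq : (cfc (· ^ 2 : ℝ → ℝ) A).IsHermitian := cfc_predicate _ A
  calc ∑ i, hA.eigenvalues i ^ 2 = ∑ i, hsq.eigenvalues i := (hA.sum_eigenvalues_cfc _ id hsq).symm
    _ = (cfc (· ^ 2 : ℝ → ℝ) A).trace := by simp [hsq.trace_eq_sum_eigenvalues]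
    _ = (Aᵀ * A).trace := by
      rw [cfc_pow_id A 2 hA.isSelfAdjoint, sq, ← conjTranspose_eq_transpose_of_trivial, hA.eq]

theorem Matrix.exp_half_inv_mul_exp_mul_exp_half_inv {𝕜 : Type*} [RCLike 𝕜] {m : Type*}
    [Fintype m] [DecidableEq m] {X Y : Matrix m m 𝕜} (h : Commute X Y) :
    (NormedSpace.exp ((2⁻¹ : ℝ) • X))⁻¹ * NormedSpace.exp Y * (NormedSpace.exp ((2⁻¹ : ℝ) • X))⁻¹
      = NormedSpace.exp (Y - X) := by
  have h₁ : Commute (-((2⁻¹ : ℝ) • X)) Y := (h.smul_left _).neg_left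
  rw [← Matrix.exp_neg, ← Matrix.exp_add_of_commute _ _ h₁,
    ← Matrix.exp_add_of_commute _ _ ((Commute.refl _).add_left h₁.symm)]
  congr 1
  module

section Fin

variable {n : ℕ}

theorem msqrt_eq_cfc {X : Matrix (Fin n) (Fin n) ℝ} (hX : X.PosSemidef) :
    msqrt X = cfc Real.sqrt X := by
  rw [msqrt, dif_pos hX, hX.1.cfc_eq, IsHermitian.cfc, Unitary.conjStarAlgAut_apply]

theorem msqrt_exp {X : Matrix (Fin n) (Fin n) ℝ} (hX : X.IsHermitian) :
    msqrt (NormedSpace.exp X) = NormedSpace.exp ((2⁻¹ : ℝ) • X) := by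
  rw [msqrt_eq_cfc hX.posSemidef_exp, ← hX.cfc_exp, ← hX.cfc_comp_eq,
    ← (hX.smul (IsSelfAdjoint.all (2⁻¹ : ℝ))).cfc_exp,
    ← cfc_comp_smul _ _ _ Real.continuous_exp.continuousOn hX.isSelfAdjoint]
  refine cfc_congr fun x _ => ?_
  rw [Function.comp_apply, ← Real.exp_half, smul_eq_mul, inv_mul_eq_div]

theorem geoDist_eq_of_eq {X Y M : Matrix (Fin n) (Fin n) ℝ}
    (hM : (msqrt X)⁻¹ * Y * (msqrt X)⁻¹ = M) (h : M.IsHermitian) :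
    geoDist X Y = Real.sqrt (∑ i, Real.log (h.eigenvalues i) ^ 2) := by
  subst hM
  rw [geoDist, dif_pos h]

end Fin

/-- For commuting real symmetric matrices `𝒳`, `𝒴`,
`d(exp 𝒳, exp 𝒴) = ‖𝒳 − 𝒴‖_F`. -/
theorem stmt3 {n : ℕ} (𝒳 𝒴 : Matrix (Fin n) (Fin n) ℝ)
    (hX : 𝒳.IsHermitian) (hY : 𝒴.IsHermitian) (hcomm : 𝒳 * 𝒴 = 𝒴 * 𝒳) :
    geoDist (NormedSpace.exp 𝒳) (NormedSpace.exp 𝒴) = frobNorm (𝒳 - 𝒴) := by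
  have hYX : (𝒴 - 𝒳).IsHermitian := hY.sub hX
  have hconj : (msqrt (NormedSpace.exp 𝒳))⁻¹ * NormedSpace.exp 𝒴 * (msqrt (NormedSpace.exp 𝒳))⁻¹
      = NormedSpace.exp (𝒴 - 𝒳) := by
    rw [msqrt_exp hX]
    exact exp_half_inv_mul_exp_mul_exp_half_inv hcomm
  rw [geoDist_eq_of_eq hconj hYX.exp, hYX.sum_sq_log_eigenvalues_exp, hYX.sum_sq_eigenvalues,
    frobNorm, ← neg_sub 𝒴 𝒳, transpose_neg, neg_mul_neg]
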